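/- If Σ: U ⊆ TM → M is a local addition on a smooth manifold M and τ: T(TM) → T(TM) is the canonical flip, then TΣ ∘ τ, defined on τ(TU), is a local addition on TM. In particular, if M admits a local addition then so does TM. -/

import Mathlib

/-!
Write `φ = (π, locAdd) : U → V` with smooth inverse `ρ`, and `κ : T(M × M) ≃ TM × TM`.
Since `Tπ ∘ τ = π_TM`, the pair `(π_TM, T locAdd ∘ τ)` agrees with `κ ∘ Tφ ∘ τ` on
`τ(TU) = τ⁻¹(TU)`. By the chain rule `Tφ : TU → TV` is a bijection with smooth inverse `Tρ`,
so the pair is a bijection onto the open neighbourhood `κ(TV)` of the diagonal of `TM`, with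
smooth inverse `τ ∘ Tρ ∘ κ⁻¹`. On the zero section, `τ (0_v) = T0 (v)` and `locAdd ∘ 0 = id`
give `T locAdd (τ 0_v) = v`.
-/

open Bundle Manifold

noncomputable section

/-- A local addition on a manifold `N`: a smooth map `locAdd : U → N` defined on an open
neighbourhood `U` of the zero section in `TN`, with `locAdd (0_x) = x`, such that
`(π, locAdd)` is a diffeomorphism from `U` onto an open neighbourhood of the diagonal. -/
def IsLocalAddition {E : Type*} [NormedAddCommGroup E] [NormedSpace ℝ E]
    {HH : Type*} [TopologicalSpace HH] (I : ModelWithCorners ℝ E HH)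
    (N : Type*) [TopologicalSpace N] [ChartedSpace HH N] [IsManifold I (⊤ : ℕ∞) N]
    (locAdd : TangentBundle I N → N) (U : Set (TangentBundle I N)) : Prop :=
  IsOpen U ∧ (∀ x : N, (⟨x, 0⟩ : TangentBundle I N) ∈ U) ∧
  (∀ x : N, locAdd ⟨x, 0⟩ = x) ∧
  ContMDiffOn I.tangent I (⊤ : ℕ∞) locAdd U ∧
  ∃ V : Set (N × N), IsOpen V ∧ (∀ x : N, (x, x) ∈ V) ∧
    Set.BijOn (fun v => (v.proj, locAdd v)) U V ∧
    ∃ ρ : N × N → TangentBundle I N, ContMDiffOn (I.prod I) I.tangent (⊤ : ℕ∞) ρ V ∧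
      ∀ v ∈ U, ρ (v.proj, locAdd v) = v

/-- A local addition is adapted to a submersion `s : N → M` if it maps every vector in its
domain that is tangent to an `s`-fibre (i.e. in the kernel of `Ts`) into the same fibre. -/
def AdaptedTo {E : Type*} [NormedAddCommGroup E] [NormedSpace ℝ E]
    {HH : Type*} [TopologicalSpace HH] (I : ModelWithCorners ℝ E HH)
    {N : Type*} [TopologicalSpace N] [ChartedSpace HH N]
    {F : Type*} [NormedAddCommGroup F] [NormedSpace ℝ F]
    {HM : Type*} [TopologicalSpace HM] (IM : ModelWithCorners ℝ F HM)
    {M : Type*} [TopologicalSpace M] [ChartedSpace HM M]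
    (s : N → M) (locAdd : TangentBundle I N → N) (U : Set (TangentBundle I N)) : Prop :=
  ∀ v ∈ U, mfderiv I IM s v.proj v.2 = 0 → s (locAdd v) = s v.proj


open Set Filter Topology

section TangentMap

variable {E : Type*} [NormedAddCommGroup E] [NormedSpace ℝ E]
  {E' : Type*} [NormedAddCommGroup E'] [NormedSpace ℝ E']
  {E'' : Type*} [NormedAddCommGroup E''] [NormedSpace ℝ E'']
  {H : Type*} [TopologicalSpace H] {I : ModelWithCorners ℝ E H}
  {H' : Type*} [TopologicalSpace H'] {I' : ModelWithCorners ℝ E' H'}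
  {H'' : Type*} [TopologicalSpace H''] {I'' : ModelWithCorners ℝ E'' H''}
  {M : Type*} [TopologicalSpace M] [ChartedSpace H M]
  {M' : Type*} [TopologicalSpace M'] [ChartedSpace H' M']
  {M'' : Type*} [TopologicalSpace M''] [ChartedSpace H'' M'']

theorem tangentMap_tangentMap_of_eventually_leftInverse {f : M → M'} {g : M' → M}
    {p : TangentBundle I M} (hg : MDifferentiableAt I' I g (f p.proj))
    (hf : MDifferentiableAt I I' f p.proj) (hgf : ∀ᶠ x in 𝓝 p.proj, g (f x) = x) :
    tangentMap I' I g (tangentMap I I' f p) = p := by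
  have h : g ∘ f =ᶠ[𝓝 p.proj] id := hgf
  rw [← tangentMap_comp_at p hg hf]
  simp only [tangentMap, h.mfderiv_eq, mfderiv_id]
  rw [h.eq_of_nhds]
  rfl

theorem Set.LeftInvOn.tangentMap {f : M → M'} {g : M' → M} {s : Set M} {t : Set M'}
    (h : LeftInvOn g f s) (hs : IsOpen s) (ht : IsOpen t) (hfst : MapsTo f s t)
    (hf : MDifferentiableOn I I' f s) (hg : MDifferentiableOn I' I g t) :
    LeftInvOn (tangentMap I' I g) (tangentMap I I' f) (π E (TangentSpace I) ⁻¹' s) :=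
  fun _ hp =>
  tangentMap_tangentMap_of_eventually_leftInverse
    (hg.mdifferentiableAt (ht.mem_nhds (hfst hp))) (hf.mdifferentiableAt (hs.mem_nhds hp))
    (eventually_of_mem (hs.mem_nhds hp) fun _ hx => h hx)

theorem Set.BijOn.tangentMap {f : M → M'} {g : M' → M} {s : Set M} {t : Set M'}
    (hbij : BijOn f s t) (h : LeftInvOn g f s) (hs : IsOpen s) (ht : IsOpen t)
    (hf : MDifferentiableOn I I' f s) (hg : MDifferentiableOn I' I g t) :
    BijOn (tangentMap I I' f) (π E (TangentSpace I) ⁻¹' s)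
      (π E' (TangentSpace I') ⁻¹' t) := by
  have hgts : MapsTo g t s := h.mapsTo hbij.surjOn
  have hfg : LeftInvOn f g t := hbij.image_eq ▸ h.rightInvOn_image
  refine InvOn.bijOn ⟨h.tangentMap hs ht hbij.mapsTo hf hg, hfg.tangentMap ht hs hgts hg hf⟩
    (fun _ hp => hbij.mapsTo hp) fun _ hq => hgts hq

theorem equivTangentBundleProd_tangentMap_prodMk {f : M → M'} {g : M → M''}
    {p : TangentBundle I M} (hf : MDifferentiableAt I I' f p.proj)
    (hg : MDifferentiableAt I I'' g p.proj) :
    equivTangentBundleProd I' M' I'' M'' (tangentMap I (I'.prod I'') (fun x => (f x, g x)) p) =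
      (tangentMap I I' f p, tangentMap I I'' g p) := by
  rw [tangentMap, mfderiv_prodMk hf hg]
  rfl

theorem ContMDiffOn.contMDiffOn_tangentMap_of_isOpen [IsManifold I 1 M] [IsManifold I' 1 M']
    {f : M → M'} {s : Set M} {m n : WithTop ℕ∞} (hf : ContMDiffOn I I' n f s) (hmn : m + 1 ≤ n)
    (hs : IsOpen s) :
    ContMDiffOn I.tangent I'.tangent m (tangentMap I I' f) (π E (TangentSpace I) ⁻¹' s) :=
  (hf.contMDiffOn_tangentMapWithin hmn hs.uniqueMDiffOn).congr fun _ hp =>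
    (tangentMapWithin_eq_tangentMap (hs.uniqueMDiffOn _ hp)
      ((hf.mdifferentiableOn (zero_lt_one.trans_le (le_add_self.trans hmn)).ne')
        |>.mdifferentiableAt (hs.mem_nhds hp))).symm

end TangentMap

section Flip

variable {E : Type*} [NormedAddCommGroup E] [NormedSpace ℝ E]
  {E' : Type*} [NormedAddCommGroup E'] [NormedSpace ℝ E']
  {H : Type*} [TopologicalSpace H] {I : ModelWithCorners ℝ E H}
  {H' : Type*} [TopologicalSpace H'] {I' : ModelWithCorners ℝ E' H'}
  {M : Type*} [TopologicalSpace M] [ChartedSpace H M] [IsManifold I 1 M]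
  {M' : Type*} [TopologicalSpace M'] [ChartedSpace H' M']
  {τ : TangentBundle I.tangent (TangentBundle I M) → TangentBundle I.tangent (TangentBundle I M)}

theorem equivTangentBundleProd_tangentMap_proj_prodMk_comp_flip
    (hτ_proj : ∀ w, tangentMap I.tangent I (π E (TangentSpace I)) (τ w) = w.proj)
    {f : TangentBundle I M → M'} {w : TangentBundle I.tangent (TangentBundle I M)}
    (hf : MDifferentiableAt I.tangent I' f (τ w).proj) :
    equivTangentBundleProd I M I' M'
        (tangentMap I.tangent (I.prod I') (fun v => (v.proj, f v)) (τ w)) =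
      (w.proj, tangentMap I.tangent I' f (τ w)) := by
  rw [equivTangentBundleProd_tangentMap_prodMk (mdifferentiableAt_proj _) hf, hτ_proj]

theorem flip_zero_eq (hτ_invol : ∀ w, τ (τ w) = w)
    (hτ_zero : ∀ v : TangentBundle I M,
      τ (tangentMap I I.tangent (fun m => (⟨m, 0⟩ : TangentBundle I M)) v) = ⟨v, 0⟩)
    (x : TangentBundle I M) :
    τ ⟨x, 0⟩ = tangentMap I I.tangent (fun m => (⟨m, 0⟩ : TangentBundle I M)) x := by
  rw [← hτ_zero x, hτ_invol]

theorem tangentMap_flip_zero (hτ_invol : ∀ w, τ (τ w) = w)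
    (hτ_zero : ∀ v : TangentBundle I M,
      τ (tangentMap I I.tangent (fun m => (⟨m, 0⟩ : TangentBundle I M)) v) = ⟨v, 0⟩)
    {f : TangentBundle I M → M} {x : TangentBundle I M}
    (hf : MDifferentiableAt I.tangent I f ⟨x.proj, 0⟩) (hf_zero : ∀ m, f ⟨m, 0⟩ = m) :
    tangentMap I.tangent I f (τ ⟨x, 0⟩) = x := by
  rw [flip_zero_eq hτ_invol hτ_zero]
  exact tangentMap_tangentMap_of_eventually_leftInverse hf
    ((contMDiff_zeroSection ℝ (TangentSpace I) (n := 1)).mdifferentiableAt one_ne_zero)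
    (Eventually.of_forall hf_zero)

end Flip

theorem tangent_bundle_local_addition
    {E : Type*} [NormedAddCommGroup E] [NormedSpace ℝ E]
    {HM : Type*} [TopologicalSpace HM] (I : ModelWithCorners ℝ E HM)
    (M : Type*) [TopologicalSpace M] [ChartedSpace HM M] [IsManifold I (⊤ : ℕ∞) M]
    (locAdd : TangentBundle I M → M) (U : Set (TangentBundle I M))
    (hla : IsLocalAddition I M locAdd U)
    -- the canonical flip τ of T(TM), through its characterising properties
    (τ : TangentBundle I.tangent (TangentBundle I M) →
         TangentBundle I.tangent (TangentBundle I M))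
    (hτ_smooth : ContMDiff I.tangent.tangent I.tangent.tangent (⊤ : ℕ∞) τ)
    (hτ_invol : ∀ w, τ (τ w) = w)
    (hτ_proj : ∀ w, tangentMap I.tangent I
        (Bundle.TotalSpace.proj : TangentBundle I M → M) (τ w) = w.proj)
    (hτ_zero : ∀ v : TangentBundle I M,
        τ (tangentMap I I.tangent (fun m => (⟨m, 0⟩ : TangentBundle I M)) v) =
          (⟨v, 0⟩ : TangentBundle I.tangent (TangentBundle I M))) :
    IsLocalAddition I.tangent (TangentBundle I M)
      (fun w => tangentMap I.tangent I locAdd (τ w))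
      (τ '' {w | w.proj ∈ U}) := by
  have hτ : Function.Involutive τ := hτ_invol
  obtain ⟨hU, hU_zero, hzero, hsmooth, V, hV, hV_diag, hbij, ρ, hρ, hρφ⟩ := hla
  set φ : TangentBundle I M → M × M := fun v => (v.proj, locAdd v)
  set κ := equivTangentBundleProd I M I M
  set TU := {u : TangentBundle I.tangent (TangentBundle I M) | u.proj ∈ U}
  set TV := {q : TangentBundle (I.prod I) (M × M) | q.proj ∈ V}
  have hρφ : LeftInvOn ρ φ U := hρφ
  have hlocAdd : MDifferentiableOn I.tangent I locAdd U := hsmooth.mdifferentiableOn (by simp)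
  have hφ : MDifferentiableOn I.tangent (I.prod I) φ U :=
    ((contMDiffOn_proj _).prodMk hsmooth).mdifferentiableOn (by simp)
  have hρ' : MDifferentiableOn (I.prod I) I.tangent ρ V := hρ.mdifferentiableOn (by simp)
  have hTφ : BijOn (tangentMap I.tangent (I.prod I) φ ∘ τ) (τ ⁻¹' TU) TV :=
    (hbij.tangentMap hρφ hU hV hφ hρ').comp hτ.bijective.bijOn_preimage
  have hTρ : LeftInvOn (τ ∘ tangentMap (I.prod I) I.tangent ρ ∘ κ.symm)
      (κ ∘ tangentMap I.tangent (I.prod I) φ ∘ τ) (τ ⁻¹' TU) :=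
    (LeftInvOn.comp (fun w _ => hτ w) (hρφ.tangentMap hU hV hbij.mapsTo hφ hρ')
      fun _ hw => hw).comp (fun q _ => κ.symm_apply_apply q) hTφ.mapsTo
  have hkey : EqOn (κ ∘ tangentMap I.tangent (I.prod I) φ ∘ τ)
      (fun w => (w.proj, tangentMap I.tangent I locAdd (τ w))) (τ ⁻¹' TU) := fun w hw =>
    equivTangentBundleProd_tangentMap_proj_prodMk_comp_flip hτ_proj
      (hlocAdd.mdifferentiableAt (hU.mem_nhds hw))
  rw [hτ.image_eq_preimage_symm]
  refine ⟨(hU.preimage (FiberBundle.continuous_proj _ _)).preimage hτ_smooth.continuous,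
    fun x => by rw [mem_preimage, flip_zero_eq hτ_invol hτ_zero]; exact hU_zero x.proj,
    fun x => tangentMap_flip_zero hτ_invol hτ_zero
      (hlocAdd.mdifferentiableAt (hU.mem_nhds (hU_zero x.proj))) hzero,
    (hsmooth.contMDiffOn_tangentMap_of_isOpen (by simp) hU).comp hτ_smooth.contMDiffOn
      fun _ hw => hw,
    κ '' TV, κ.image_eq_preimage_symm TV ▸
      (hV.preimage (FiberBundle.continuous_proj _ _)).preimage
        (contMDiff_equivTangentBundleProd_symm (n := 0)).continuous,
    fun x => ⟨κ.symm (x, x), hV_diag x.proj, κ.apply_symm_apply _⟩,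
    (κ.injective.bijOn_image.comp hTφ).congr hkey,
    τ ∘ tangentMap (I.prod I) I.tangent ρ ∘ κ.symm,
    hτ_smooth.comp_contMDiffOn ((hρ.contMDiffOn_tangentMap_of_isOpen (by simp) hV).comp
      contMDiff_equivTangentBundleProd_symm.contMDiffOn (κ.image_eq_preimage_symm TV).subset),
    hTρ.congr_right hkey⟩
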